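/- For every irrational x in (0,1), lim_{j→∞} β_j(x)·log a_j(x) = 0, where a_j are the partial quotients and β_j(x)=∏_{i=0}^{j}G^i(x). -/

import Mathlib

/-!
Write `y i = Gⁱ(x)`. Then `β_{j+1} log a_{j+1} = (∏_{i<j} y i) · y (j+1) · (y j · log ⌊1/y j⌋)`.
The last factor is at most `y j · (1 / y j) = 1`, and `y (j+1) < 1`, so it suffices that the
products `∏_{i<j} y i` tend to `0`. They do because two consecutive iterates satisfy
`y · G(y) = 1 - ⌊1/y⌋ y ≤ 1/2`, so the products at least halve every two steps.
-/

open Filter Topology Finset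

/-- Gauss map `G(y) = 1/y - ⌊1/y⌋`. -/
noncomputable def gauss (x : ℝ) : ℝ := Int.fract x⁻¹

/-- `pa x j` is the `j`-th continued fraction partial quotient `a_j(x) = ⌊1/G^{j-1}(x)⌋` (for `j ≥ 1`). -/
noncomputable def pa (x : ℝ) (j : ℕ) : ℤ := ⌊(gauss^[j-1] x)⁻¹⌋

/-- `beta x j = β_j(x) = ∏_{i=0}^{j} G^i(x)`. -/
noncomputable def beta (x : ℝ) (j : ℕ) : ℝ := ∏ i ∈ Finset.range (j+1), gauss^[i] x

/-- Convergent denominators: `q_0 = 1`, `q_1 = a_1`, `q_j = a_j q_{j-1} + q_{j-2}`. -/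
noncomputable def q (x : ℝ) : ℕ → ℤ
  | 0 => 1
  | 1 => pa x 1
  | (n+2) => pa x (n+2) * q x (n+1) + q x n

section Products

variable {y : ℕ → ℝ} {c : ℝ}

lemma prod_range_two_mul_le_pow (hy0 : ∀ i, 0 ≤ y i) (hpair : ∀ i, y i * y (i + 1) ≤ c)
    (n : ℕ) : ∏ i ∈ range (2 * n), y i ≤ c ^ n := by
  induction n with
  | zero => simp
  | succ n ih =>
    have hP : 0 ≤ ∏ i ∈ range (2 * n), y i := prod_nonneg fun i _ => hy0 i
    calc ∏ i ∈ range (2 * (n + 1)), y i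
        = (∏ i ∈ range (2 * n), y i) * (y (2 * n) * y (2 * n + 1)) := by
          rw [show 2 * (n + 1) = 2 * n + 1 + 1 by ring, prod_range_succ, prod_range_succ, mul_assoc]
      _ ≤ c ^ n * c := mul_le_mul ih (hpair _) (mul_nonneg (hy0 _) (hy0 _)) (hP.trans ih)
      _ = c ^ (n + 1) := (pow_succ c n).symm

lemma prod_range_antitone (hy0 : ∀ i, 0 ≤ y i) (hy1 : ∀ i, y i ≤ 1) :
    Antitone fun j => ∏ i ∈ range j, y i :=
  antitone_nat_of_succ_le fun j => by
    rw [prod_range_succ]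
    exact mul_le_of_le_one_right (prod_nonneg fun i _ => hy0 i) (hy1 j)

lemma tendsto_prod_range_zero_of_mul_succ_le (hy0 : ∀ i, 0 ≤ y i) (hy1 : ∀ i, y i ≤ 1)
    (hc : c < 1) (hpair : ∀ i, y i * y (i + 1) ≤ c) :
    Tendsto (fun j => ∏ i ∈ range j, y i) atTop (𝓝 0) := by
  have hc0 : 0 ≤ c := (mul_nonneg (hy0 0) (hy0 1)).trans (hpair 0)
  have hpow : Tendsto (fun j : ℕ => c ^ (j / 2)) atTop (𝓝 0) :=
    (tendsto_pow_atTop_nhds_zero_of_lt_one hc0 hc).comp (Nat.tendsto_div_const_atTop two_ne_zero)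
  refine squeeze_zero (fun j => prod_nonneg fun i _ => hy0 i) (fun j => ?_) hpow
  calc ∏ i ∈ range j, y i ≤ ∏ i ∈ range (2 * (j / 2)), y i :=
        prod_range_antitone hy0 hy1 (Nat.mul_div_le j 2)
    _ ≤ c ^ (j / 2) := prod_range_two_mul_le_pow hy0 hpair _

end Products

lemma gauss_lt_one (y : ℝ) : gauss y < 1 := Int.fract_lt_one _

lemma irrational_gauss {y : ℝ} (hy : Irrational y) : Irrational (gauss y) :=
  hy.inv.sub_intCast ⌊y⁻¹⌋

lemma gauss_pos_of_irrational {y : ℝ} (hy : Irrational y) : 0 < gauss y :=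
  (Int.fract_nonneg _).lt_of_ne fun h => irrational_gauss hy ⟨0, by simpa [gauss] using h⟩

lemma irrational_gauss_iterate {y : ℝ} (hy : Irrational y) (n : ℕ) :
    Irrational (gauss^[n] y) := by
  induction n with
  | zero => exact hy
  | succ n ih => rw [Function.iterate_succ_apply']; exact irrational_gauss ih

lemma gauss_iterate_mem_Ioo {x : ℝ} (hx : x ∈ Set.Ioo (0 : ℝ) 1) (hirr : Irrational x) (n : ℕ) :
    gauss^[n] x ∈ Set.Ioo (0 : ℝ) 1 := by
  cases n with
  | zero => exact hx
  | succ n =>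
    rw [Function.iterate_succ_apply']
    exact ⟨gauss_pos_of_irrational (irrational_gauss_iterate hirr n), gauss_lt_one _⟩

lemma mul_gauss_le_half {y : ℝ} (hy : y ∈ Set.Ioo (0 : ℝ) 1) : y * gauss y ≤ 1 / 2 := by
  obtain ⟨hy0, hy1⟩ := hy
  have ha : (1 : ℝ) ≤ ⌊y⁻¹⌋ := by
    exact_mod_cast Int.le_floor.2 (by simpa using (one_le_inv₀ hy0).2 hy1.le)
  have hlt : y⁻¹ < ⌊y⁻¹⌋ + 1 := Int.lt_floor_add_one _
  have hmul : y * y⁻¹ = 1 := mul_inv_cancel₀ hy0.ne'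
  have hexpand : y * gauss y = 1 - ⌊y⁻¹⌋ * y := by
    rw [gauss, Int.fract, mul_sub, hmul, mul_comm]
  nlinarith

lemma mul_log_floor_inv_le_one {y : ℝ} (hy : 0 < y) : y * Real.log ⌊y⁻¹⌋ ≤ 1 := by
  have hfloor : (0 : ℝ) ≤ ⌊y⁻¹⌋ := by exact_mod_cast Int.floor_nonneg.2 (inv_nonneg.2 hy.le)
  calc y * Real.log ⌊y⁻¹⌋ ≤ y * y⁻¹ :=
        mul_le_mul_of_nonneg_left ((Real.log_le_self hfloor).trans (Int.floor_le _)) hy.le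
    _ = 1 := mul_inv_cancel₀ hy.ne'

/-- `β_j log a_j → 0` for every irrational `x ∈ (0,1)`. -/
theorem stmt5 (x : ℝ) (hx : x ∈ Set.Ioo (0:ℝ) 1) (hirr : Irrational x) :
    Tendsto (fun j : ℕ => beta x (j+1) * Real.log (pa x (j+1))) atTop (nhds 0) := by
  set y : ℕ → ℝ := fun i => gauss^[i] x with hy_def
  have hy : ∀ i, y i ∈ Set.Ioo (0 : ℝ) 1 := gauss_iterate_mem_Ioo hx hirr
  have hpair : ∀ i, y i * y (i + 1) ≤ 1 / 2 := fun i => by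
    simpa only [hy_def, Function.iterate_succ_apply'] using mul_gauss_le_half (hy i)
  have hprod : Tendsto (fun j => ∏ i ∈ range j, y i) atTop (𝓝 0) :=
    tendsto_prod_range_zero_of_mul_succ_le (fun i => (hy i).1.le) (fun i => (hy i).2.le)
      (by norm_num) hpair
  have hterm : ∀ j, beta x (j + 1) * Real.log (pa x (j + 1))
      = (∏ i ∈ range j, y i) * y (j + 1) * (y j * Real.log ⌊(y j)⁻¹⌋) := fun j => by
    simp only [beta, pa, hy_def, prod_range_succ, add_tsub_cancel_right]
    ring
  have hprod_nonneg : ∀ j, 0 ≤ ∏ i ∈ range j, y i := fun j => prod_nonneg fun i _ => (hy i).1.le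
  have hlog_nonneg : ∀ j, 0 ≤ y j * Real.log ⌊(y j)⁻¹⌋ :=
    fun j => mul_nonneg (hy j).1.le (Real.log_intCast_nonneg _)
  refine squeeze_zero (fun j => ?_) (fun j => ?_) hprod <;> rw [hterm]
  · exact mul_nonneg (mul_nonneg (hprod_nonneg j) (hy (j + 1)).1.le) (hlog_nonneg j)
  · exact (mul_le_of_le_one_right (mul_nonneg (hprod_nonneg j) (hy (j + 1)).1.le)
      (mul_log_floor_inv_le_one (hy j).1)).trans
      (mul_le_of_le_one_right (hprod_nonneg j) (hy (j + 1)).2.le)
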